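/- arXiv:2303.10165 — 4 statements merged into one kernel-verified Lean document; each statement's English description precedes it below -/
import Mathlib

section
/- Let d be a positive integer and let A and B be d×d real positive definite matrices such that A − B is positive semidefinite. Then for every x ∈ ℝ^d, ‖x‖_A ≤ ‖x‖_B · √(det A / det B), i.e. √(xᵀAx) ≤ √(xᵀBx) · √(det A / det B). -/
open Matrix

set_option maxHeartbeats 1000000

/-- Key lemma: if `C` is a real symmetric matrix with `C ⪰ 1`, then `C ⪯ (det C) • 1`. -/
theorem aux_key {d : ℕ} {C : Matrix (Fin d) (Fin d) ℝ} (hC : C.IsHermitian)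
    (h1 : (C - 1).PosSemidef) :
    (C.det • (1 : Matrix (Fin d) (Fin d) ℝ) - C).PosSemidef := by
  set lam := hC.eigenvalues with hlam
  have hge : ∀ i, 1 ≤ lam i := by
    intro i
    set v : Fin d → ℝ := ⇑(hC.eigenvectorBasis i) with hv
    have hv1 : v ⬝ᵥ v = 1 := by
      have hnorm := hC.eigenvectorBasis.orthonormal.1 i
      have h2 : (inner ℝ (hC.eigenvectorBasis i) (hC.eigenvectorBasis i) : ℝ) = 1 := by
        rw [real_inner_self_eq_norm_sq, hnorm]; norm_num
      rw [EuclideanSpace.inner_eq_star_dotProduct] at h2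
      simpa using h2
    have h0 := h1.dotProduct_mulVec_nonneg v
    rw [hv, sub_mulVec, one_mulVec, hC.mulVec_eigenvectorBasis] at h0
    rw [← hv] at h0
    rw [dotProduct_sub, dotProduct_smul, star_trivial, hv1] at h0
    simp only [smul_eq_mul, mul_one] at h0
    linarith
  have hdet : C.det = ∏ i, lam i := by
    simpa using hC.det_eq_prod_eigenvalues
  have hle : ∀ i, lam i ≤ C.det := by
    intro i
    have h1p : (1:ℝ) ≤ ∏ j ∈ Finset.univ.erase i, lam j := by
      have := Finset.prod_le_prod (s := Finset.univ.erase i) (f := fun _ => (1:ℝ))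
        (g := lam) (fun j _ => zero_le_one) (fun j _ => hge j)
      simpa using this
    rw [hdet]
    calc lam i = lam i * 1 := (mul_one _).symm
      _ ≤ lam i * ∏ j ∈ Finset.univ.erase i, lam j :=
          mul_le_mul_of_nonneg_left h1p (le_trans zero_le_one (hge i))
      _ = ∏ j, lam j := Finset.mul_prod_erase _ _ (Finset.mem_univ i)
  set U : Matrix (Fin d) (Fin d) ℝ := (hC.eigenvectorUnitary : Matrix (Fin d) (Fin d) ℝ) with hU
  have hUU : U * star U = 1 := Matrix.mem_unitaryGroup_iff.mp hC.eigenvectorUnitary.2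
  have hdiag : C.det • (1 : Matrix (Fin d) (Fin d) ℝ)
      - diagonal (RCLike.ofReal ∘ lam) = diagonal (fun i => C.det - lam i) := by
    ext i j
    rcases eq_or_ne i j with h | h
    · subst h; simp [Matrix.diagonal_apply_eq, Matrix.one_apply_eq]
    · simp [Matrix.diagonal_apply_ne _ h, Matrix.one_apply_ne h]
  have h2 : U * (C.det • (1 : Matrix (Fin d) (Fin d) ℝ)) * star U
      = C.det • (1 : Matrix (Fin d) (Fin d) ℝ) := by
    rw [Matrix.mul_smul, Matrix.mul_one, Matrix.smul_mul, hUU]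
  have hrw : C.det • (1 : Matrix (Fin d) (Fin d) ℝ) - C
      = U * diagonal (fun i => C.det - lam i) * star U := by
    nth_rewrite 2 [hC.spectral_theorem]
    rw [Unitary.conjStarAlgAut_apply]
    rw [← h2, ← hU, ← Matrix.sub_mul, ← Matrix.mul_sub, hdiag]
  rw [hrw, Matrix.star_eq_conjTranspose]
  exact (Matrix.posSemidef_diagonal_iff.mpr
    (fun i => sub_nonneg.mpr (hle i))).mul_mul_conjTranspose_same U

/-- If `A ⪰ B` are positive definite matrices, then for any vector `x`,
`‖x‖_A ≤ ‖x‖_B · √(det A / det B)`. -/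
theorem stmt_0 (d : ℕ) (hd : 0 < d) (A B : Matrix (Fin d) (Fin d) ℝ)
    (hA : A.PosDef) (hB : B.PosDef) (hAB : (A - B).PosSemidef) (x : Fin d → ℝ) :
    Real.sqrt (x ⬝ᵥ A.mulVec x) ≤
      Real.sqrt (x ⬝ᵥ B.mulVec x) * Real.sqrt (A.det / B.det) := by
  classical
  obtain ⟨S, hSH, hSS⟩ : ∃ S : Matrix (Fin d) (Fin d) ℝ, S.IsHermitian ∧ S * S = B :=
    open scoped MatrixOrder in
      ⟨CFC.sqrt B, (CFC.sqrt_nonneg B).posSemidef.1, CFC.sqrt_mul_sqrt_self B hB.posSemidef.nonneg⟩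
  have hdetS : S.det * S.det = B.det := by
    rw [← Matrix.det_mul, hSS]
  have hdetSne : S.det ≠ 0 := by
    intro h
    have := hB.det_pos
    rw [← hdetS, h, mul_zero] at this
    exact lt_irrefl 0 this
  have hSunit : IsUnit S.det := isUnit_iff_ne_zero.mpr hdetSne
  have hSinvH : (S⁻¹).IsHermitian := by
    rw [Matrix.IsHermitian, Matrix.conjTranspose_nonsing_inv, hSH.eq]
  set C : Matrix (Fin d) (Fin d) ℝ := S⁻¹ * A * S⁻¹ with hCdef
  have hCH : C.IsHermitian := by
    rw [Matrix.IsHermitian, hCdef, Matrix.conjTranspose_mul, Matrix.conjTranspose_mul,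
      hSinvH.eq, hA.isHermitian.eq, Matrix.mul_assoc]
  have hSinvB : S⁻¹ * B * S⁻¹ = 1 := by
    rw [← hSS, ← Matrix.mul_assoc, Matrix.mul_assoc (S⁻¹ * S),
      Matrix.mul_nonsing_inv _ hSunit, Matrix.mul_one, Matrix.nonsing_inv_mul _ hSunit]
  have hC1 : (C - 1).PosSemidef := by
    have heq : C - 1 = S⁻¹ * (A - B) * (S⁻¹)ᴴ := by
      rw [hSinvH.eq, Matrix.mul_sub, Matrix.sub_mul, ← hCdef, hSinvB]
    rw [heq]
    exact hAB.mul_mul_conjTranspose_same _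
  have hdetC : C.det = A.det / B.det := by
    rw [hCdef, Matrix.det_mul, Matrix.det_mul, Matrix.det_nonsing_inv,
      Ring.inverse_eq_inv, ← hdetS]
    field_simp
  have hkey := aux_key hCH hC1
  have hback : S * (C.det • (1 : Matrix (Fin d) (Fin d) ℝ) - C) * Sᴴ
      = C.det • B - A := by
    rw [hSH.eq, Matrix.mul_sub, Matrix.sub_mul]
    congr 1
    · rw [Matrix.mul_smul, Matrix.mul_one, Matrix.smul_mul, hSS]
    · rw [hCdef, ← Matrix.mul_assoc, ← Matrix.mul_assoc,
        Matrix.mul_nonsing_inv _ hSunit, Matrix.one_mul, Matrix.mul_assoc,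
        Matrix.nonsing_inv_mul _ hSunit, Matrix.mul_one]
  have hfinal : (C.det • B - A).PosSemidef := by
    rw [← hback]
    exact hkey.mul_mul_conjTranspose_same S
  have hx := hfinal.dotProduct_mulVec_nonneg x
  rw [sub_mulVec, dotProduct_sub, smul_mulVec, dotProduct_smul, star_trivial] at hx
  have hquad : x ⬝ᵥ A.mulVec x ≤ (A.det / B.det) * (x ⬝ᵥ B.mulVec x) := by
    have h' := sub_nonneg.mp hx
    simpa [hdetC, smul_eq_mul] using h'
  calc Real.sqrt (x ⬝ᵥ A.mulVec x)
      ≤ Real.sqrt ((A.det / B.det) * (x ⬝ᵥ B.mulVec x)) := Real.sqrt_le_sqrt hquad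
    _ = Real.sqrt (x ⬝ᵥ B.mulVec x) * Real.sqrt (A.det / B.det) := by
        rw [Real.sqrt_mul (div_nonneg hA.det_pos.le hB.det_pos.le), mul_comm]
end

section
/- Let λ₁, λ₂, λ₄ > 0 and λ₃ ≥ 1 be reals, and let κ be a positive integer with log₂ λ₁ ≤ κ. Let a₁, …, a_κ be nonnegative real numbers and set a_{κ+1} = λ₁. Suppose that for every i with 1 ≤ i ≤ κ, a_i ≤ min{λ₁, λ₂·√(a_i + a_{i+1} + 2^{i+1} λ₃) + λ₄}. Then a₁ ≤ 22 λ₂² + 6 λ₄ + 4 λ₂ √(2 λ₃). -/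
private lemma aux_sqrt_add {x y : ℝ} (hx : 0 ≤ x) (hy : 0 ≤ y) :
    Real.sqrt (x + y) ≤ Real.sqrt x + Real.sqrt y := by
  have h : x + y ≤ (Real.sqrt x + Real.sqrt y) ^ 2 := by
    nlinarith [Real.sq_sqrt hx, Real.sq_sqrt hy,
      mul_nonneg (Real.sqrt_nonneg x) (Real.sqrt_nonneg y)]
  have := Real.sqrt_le_sqrt h
  rwa [Real.sqrt_sq (by positivity)] at this

private lemma aux1 {a b l2 l4 : ℝ} (ha : 0 ≤ a) (hb : 0 ≤ b) (hl2 : 0 < l2)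
    (hl4 : 0 ≤ l4) (h : a ≤ l2 * Real.sqrt (a + b) + l4) :
    a ≤ 4 * l2 ^ 2 + 2 * l4 + 2 * l2 * Real.sqrt b := by
  have hsa : 0 ≤ Real.sqrt a := Real.sqrt_nonneg a
  have hsb : 0 ≤ Real.sqrt b := Real.sqrt_nonneg b
  have hsplit := aux_sqrt_add ha hb
  have hmul := mul_le_mul_of_nonneg_left hsplit hl2.le
  rcases le_or_gt a (4 * l2 ^ 2) with h' | h'
  · nlinarith [mul_nonneg hl2.le hsb]
  · have h2 : 2 * l2 ≤ Real.sqrt a := by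
      have h3 : Real.sqrt ((2 * l2) ^ 2) ≤ Real.sqrt a := Real.sqrt_le_sqrt (by nlinarith)
      rwa [Real.sqrt_sq (by linarith)] at h3
    have h4 := mul_le_mul_of_nonneg_right h2 hsa
    have h5 := Real.mul_self_sqrt ha
    nlinarith

private lemma aux3 {c x : ℝ} (hc : 0 ≤ c) (hx : 0 ≤ x) :
    c * Real.sqrt x ≤ x / 8 + 2 * c ^ 2 := by
  nlinarith [sq_nonneg (Real.sqrt x - 4 * c), Real.sq_sqrt hx]

/-- Recursive sequence bound (Lemma 12, Zhang et al. 2021). -/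
theorem stmt_1 (κ : ℕ) (hκ : 0 < κ) (l1 l2 l3 l4 : ℝ)
    (hl1 : 0 < l1) (hl2 : 0 < l2) (hl4 : 0 < l4) (hl3 : 1 ≤ l3)
    (hlog : Real.logb 2 l1 ≤ κ)
    (a : ℕ → ℝ)
    (ha0 : ∀ i, 1 ≤ i → i ≤ κ → 0 ≤ a i)
    (haend : a (κ + 1) = l1)
    (hrec : ∀ i, 1 ≤ i → i ≤ κ →
      a i ≤ min l1 (l2 * Real.sqrt (a i + a (i + 1) + 2 ^ (i + 1) * l3) + l4)) :
    a 1 ≤ 22 * l2 ^ 2 + 6 * l4 + 4 * l2 * Real.sqrt (2 * l3) := by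
  set D : ℝ := (9 * l2 + 2 * l4 / l2) ^ 2 with hD
  have hDnn : 0 ≤ D := sq_nonneg _
  have hsD : Real.sqrt D = 9 * l2 + 2 * l4 / l2 := Real.sqrt_sq (by positivity)
  have h2D : 2 * l2 * Real.sqrt D = 18 * l2 ^ 2 + 4 * l4 := by
    rw [hsD]; field_simp; ring
  -- base fact : l1 ≤ 2^(κ+1) * l3
  have hl1le : l1 ≤ (2 : ℝ) ^ κ := by
    have := (Real.logb_le_iff_le_rpow (by norm_num : (1:ℝ) < 2) hl1).mp hlog
    simpa [Real.rpow_natCast] using this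
  have hbase : a (κ + 1) ≤ (2 : ℝ) ^ (κ + 1) * l3 := by
    rw [haend]
    have h1 : (2 : ℝ) ^ κ ≤ (2 : ℝ) ^ (κ + 1) := by
      have : (0:ℝ) < 2 ^ κ := by positivity
      rw [pow_succ]; nlinarith
    have h2 : (2 : ℝ) ^ (κ + 1) * 1 ≤ (2 : ℝ) ^ (κ + 1) * l3 := by
      have : (0:ℝ) < 2 ^ (κ + 1) := by positivity
      nlinarith
    linarith
  -- nonnegativity
  have hann : ∀ i, 1 ≤ i → i ≤ κ + 1 → 0 ≤ a i := by
    intro i h1 h2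
    rcases Nat.lt_or_ge i (κ + 1) with h | h
    · exact ha0 i h1 (by omega)
    · have : i = κ + 1 := by omega
      rw [this, haend]; exact hl1.le
  -- core estimate
  have core : ∀ i, 1 ≤ i → i ≤ κ → a (i + 1) ≤ max D ((2:ℝ) ^ (i+1) * l3) →
      a i ≤ 4 * l2 ^ 2 + 2 * l4 + 2 * l2 * Real.sqrt D
        + 2 * l2 * Real.sqrt ((2:ℝ) ^ (i+2) * l3) := by
    intro i hi1 hik hnext
    have hai : 0 ≤ a i := ha0 i hi1 hik
    have hp : (0:ℝ) ≤ 2 ^ (i+1) * l3 := by positivity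
    have hb0 : 0 ≤ a (i+1) + 2 ^ (i+1) * l3 :=
      add_nonneg (hann (i+1) (by omega) (by omega)) hp
    have hrec' := (hrec i hi1 hik).trans (min_le_right _ _)
    have heq : a i + a (i+1) + 2 ^ (i+1) * l3 = a i + (a (i+1) + 2 ^ (i+1) * l3) := by
      ring
    rw [heq] at hrec'
    have h1 := aux1 hai hb0 hl2 hl4.le hrec'
    have hble : a (i+1) + 2 ^ (i+1) * l3 ≤ D + 2 ^ (i+2) * l3 := by
      have hm : max D ((2:ℝ) ^ (i+1) * l3) ≤ D + 2 ^ (i+1) * l3 :=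
        max_le (le_add_of_nonneg_right hp) (le_add_of_nonneg_left hDnn)
      have hxx : (2:ℝ) ^ (i+2) * l3 = 2 ^ (i+1) * l3 + 2 ^ (i+1) * l3 := by ring
      linarith [hnext.trans hm]
    have hs1 := Real.sqrt_le_sqrt hble
    have hs2 : Real.sqrt (D + 2 ^ (i+2) * l3) ≤
        Real.sqrt D + Real.sqrt ((2:ℝ) ^ (i+2) * l3) := aux_sqrt_add hDnn (by positivity)
    have hs3 : Real.sqrt (a (i+1) + 2 ^ (i+1) * l3) ≤
        Real.sqrt D + Real.sqrt ((2:ℝ) ^ (i+2) * l3) := hs1.trans hs2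
    have hmul := mul_le_mul_of_nonneg_left hs3 (by positivity : (0:ℝ) ≤ 2 * l2)
    linarith
  -- induction claim
  have key : ∀ m i, 2 ≤ i → i + m = κ + 1 → a i ≤ max D ((2:ℝ) ^ i * l3) := by
    intro m
    induction m with
    | zero =>
      intro i h2 he
      have : i = κ + 1 := by omega
      subst this
      exact le_max_of_le_right hbase
    | succ m ih =>
      intro i h2 he
      have hi1 : 1 ≤ i := by omega
      have hik : i ≤ κ := by omega
      have hnext := ih (i + 1) (by omega) (by omega)
      have h1 := core i hi1 hik hnext
      have h3 := aux3 (by positivity : (0:ℝ) ≤ 2 * l2)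
        (by positivity : (0:ℝ) ≤ (2:ℝ) ^ (i+2) * l3)
      have hxx : (2:ℝ) ^ (i+2) * l3 / 8 = 2 ^ i * l3 / 2 := by
        rw [pow_add]; ring
      have h4 : a i ≤ 30 * l2 ^ 2 + 6 * l4 + 2 ^ i * l3 / 2 := by
        rw [hxx] at h3
        nlinarith
      rcases le_or_gt (30 * l2 ^ 2 + 6 * l4) ((2:ℝ) ^ i * l3 / 2) with h | h
      · exact le_max_of_le_right (by linarith)
      · refine le_max_of_le_left ?_
        have hDge : 60 * l2 ^ 2 + 12 * l4 ≤ D := by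
          have hexp : D = 81 * l2 ^ 2 + 36 * l4 + 4 * (l4 / l2) ^ 2 := by
            rw [hD]; field_simp; ring
          nlinarith [sq_nonneg (l4 / l2), hl4.le, sq_nonneg l2]
        linarith
  -- final step
  have hk2 : a 2 ≤ max D ((2:ℝ) ^ 2 * l3) := key (κ - 1) 2 (by omega) (by omega)
  have hfin := core 1 (by omega) hκ (by norm_num at hk2 ⊢; exact hk2)
  have hsq : Real.sqrt ((2:ℝ) ^ (1+2) * l3) = 2 * Real.sqrt (2 * l3) := by
    rw [show (2:ℝ) ^ (1+2) * l3 = 2 ^ 2 * (2 * l3) by ring,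
      Real.sqrt_mul (by positivity), Real.sqrt_sq (by norm_num)]
  rw [hsq] at hfin
  linarith [hfin, h2D.le]
end

section
/- Let d, K be positive integers, and let α, γ, λ, L > 0 be reals. Let {σ_k}_{k=1}^K and {β_k}_{k=1}^K be nonnegative reals, and let x₁, …, x_K ∈ ℝ^d satisfy ‖x_k‖₂ ≤ L. Define d×d matrices and weights recursively by Z₁ = λ·I_d and, for k ≥ 1, σ̄_k = max{σ_k, α, γ·(‖x_k‖_{Z_k^{-1}})^{1/2}} and Z_{k+1} = Z_k + x_k x_kᵀ / σ̄_k². Set ι = log(1 + K L² / (d λ α²)). Then Σ_{k=1}^K min{1, β_k ‖x_k‖_{Z_k^{-1}}} ≤ 2 d ι + 2 (max_{k∈[K]} β_k) γ² d ι + 2 √(d ι) · √(Σ_{k=1}^K β_k² (σ_k² + α²)). -/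
open Matrix Finset

/-!
Put `u_k = ‖x_k‖²_{Z_k⁻¹} / σ̄_k²`. By the matrix determinant lemma
`det Z_{K+1} = λ^d ∏ (1 + u_k)`, and AM-GM on the eigenvalues bounds `det Z_{K+1}` by
`(tr Z_{K+1} / d)^d ≤ (λ + K L² / (d α²))^d`; since `min 1 u ≤ 2 log (1 + u)`, this gives
`∑ min 1 u_k ≤ 2 d ι`. For each `k`, either `u_k ≥ 1`, or `σ̄_k² ≤ σ_k² + α²` and then
`‖x_k‖_{Z_k⁻¹} ≤ √(σ_k² + α²) √u_k`, or `σ̄_k = γ ‖x_k‖_{Z_k⁻¹}^{1/2}` and then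
`‖x_k‖_{Z_k⁻¹} ≤ γ² u_k`. Summing these cases, with Cauchy–Schwarz on the `√u_k` terms, gives the
bound.
-/

theorem Real.prod_le_arith_mean_pow_card {ι : Type*} [Fintype ι] [Nonempty ι] (z : ι → ℝ)
    (hz : ∀ i, 0 ≤ z i) : ∏ i, z i ≤ ((∑ i, z i) / Fintype.card ι) ^ Fintype.card ι := by
  set n := Fintype.card ι
  have hn : (n : ℝ) ≠ 0 := Nat.cast_ne_zero.2 Fintype.card_ne_zero
  have hmean := Real.geom_mean_le_arith_mean_weighted univ (fun _ => (n : ℝ)⁻¹) z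
    (fun _ _ => by positivity) (by simp [n, hn]) fun i _ => hz i
  calc ∏ i, z i = (∏ i, z i ^ (n : ℝ)⁻¹) ^ n := by
        rw [← prod_pow]
        refine prod_congr rfl fun i _ => ?_
        rw [← Real.rpow_mul_natCast (hz i), inv_mul_cancel₀ hn, Real.rpow_one]
    _ ≤ (∑ i, (n : ℝ)⁻¹ * z i) ^ n := by
        gcongr
        exact prod_nonneg fun i _ => Real.rpow_nonneg (hz i) _
    _ = ((∑ i, z i) / n) ^ n := by rw [← mul_sum, inv_mul_eq_div]

theorem Real.min_one_le_two_mul_log_one_add {u : ℝ} (hu : 0 ≤ u) :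
    min 1 u ≤ 2 * Real.log (1 + u) := by
  have hlog := Real.one_sub_inv_le_log_of_pos (by positivity : 0 < 1 + u)
  have hmin : min 1 u ≤ 2 * (1 - (1 + u)⁻¹) := by
    have h : 1 - (1 + u)⁻¹ = u / (1 + u) := by field_simp; ring
    rw [h, mul_div_assoc', le_div_iff₀ (by positivity)]
    rcases le_total u 1 with hu1 | hu1 <;> simp only [hu1, min_eq_left, min_eq_right] <;> nlinarith
  linarith

theorem inv_sq_mul_le_sq_div_sq {α s v L : ℝ} (hα : 0 < α) (hαs : α ≤ s) (hv : √v ≤ L) :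
    (s ^ 2)⁻¹ * v ≤ L ^ 2 / α ^ 2 := by
  rw [inv_mul_eq_div]
  exact div_le_div₀ (sq_nonneg L) (Real.sqrt_le_iff.1 hv).2 (by positivity)
    (pow_le_pow_left₀ hα.le hαs 2)

theorem sq_max_le_or_eq (σ α t : ℝ) :
    max σ (max α t) ^ 2 ≤ σ ^ 2 + α ^ 2 ∨ max σ (max α t) = t := by
  rw [← max_assoc]
  rcases le_total t (max σ α) with h | h
  · left
    rw [max_eq_left h]
    rcases max_choice σ α with h' | h' <;> rw [h'] <;> nlinarith
  · exact Or.inr (max_eq_right h)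

theorem min_one_mul_sqrt_le {β B σ α γ q s : ℝ} (hβ : 0 ≤ β) (hβB : β ≤ B) (hα : 0 < α)
    (hq : 0 ≤ q) (hs : s = max σ (max α (γ * √(√q)))) :
    min 1 (β * √q) ≤ (1 + B * γ ^ 2) * min 1 ((s ^ 2)⁻¹ * q) +
      β * √(σ ^ 2 + α ^ 2) * √(min 1 ((s ^ 2)⁻¹ * q)) := by
  set u := (s ^ 2)⁻¹ * q
  have hs0 : 0 < s := hα.trans_le (hs ▸ le_max_of_le_right (le_max_left _ _))
  have hu0 : 0 ≤ u := by positivity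
  have hq_eq : q = s ^ 2 * u := by simp only [u]; field_simp
  have hBγ : 0 ≤ B * γ ^ 2 := mul_nonneg (hβ.trans hβB) (sq_nonneg γ)
  have hrest : 0 ≤ β * √(σ ^ 2 + α ^ 2) * √(min 1 u) := by positivity
  rcases le_total 1 u with hu1 | hu1
  · rw [min_eq_left hu1] at hrest ⊢
    nlinarith [min_le_left 1 (β * √q)]
  rw [min_eq_right hu1] at hrest ⊢
  refine (min_le_right _ _).trans ?_
  rcases hs ▸ sq_max_le_or_eq σ α (γ * √(√q)) with hsσ | hsγ
  · have hsqrt : √q ≤ √(σ ^ 2 + α ^ 2) * √u := by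
      rw [← Real.sqrt_mul (by positivity), hq_eq]
      gcongr
    nlinarith [mul_le_mul_of_nonneg_left hsqrt hβ]
  · have hsq : s ^ 2 = γ ^ 2 * √q := by
      rw [hsγ, mul_pow, Real.sq_sqrt (Real.sqrt_nonneg q)]
    have hsqrt : √q ≤ γ ^ 2 * u := by
      rcases (Real.sqrt_nonneg q).eq_or_lt with h0 | hpos
      · rw [← h0]; positivity
      · refine le_of_eq (mul_left_cancel₀ hpos.ne' ?_)
        calc √q * √q = s ^ 2 * u := (Real.mul_self_sqrt hq).trans hq_eq
          _ = √q * (γ ^ 2 * u) := by rw [hsq]; ring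
    nlinarith [mul_le_mul_of_nonneg_left hsqrt hβ,
      mul_le_mul_of_nonneg_right hβB (mul_nonneg (sq_nonneg γ) hu0)]

theorem sum_le_mul_add_sqrt_mul_sqrt {ι : Type*} (s : Finset ι) {f g a : ι → ℝ} {C M : ℝ}
    (hC : 0 ≤ C) (hg : ∀ i ∈ s, 0 ≤ g i) (hM : ∑ i ∈ s, g i ≤ M)
    (hf : ∀ i ∈ s, f i ≤ C * g i + a i * √(g i)) :
    ∑ i ∈ s, f i ≤ C * M + √(∑ i ∈ s, a i ^ 2) * √M := by
  have hCS := Real.sum_mul_le_sqrt_mul_sqrt s a fun i => √(g i)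
  rw [sum_congr rfl fun i hi => Real.sq_sqrt (hg i hi)] at hCS
  calc ∑ i ∈ s, f i ≤ C * ∑ i ∈ s, g i + ∑ i ∈ s, a i * √(g i) := by
        rw [mul_sum, ← sum_add_distrib]; exact sum_le_sum hf
    _ ≤ C * M + √(∑ i ∈ s, a i ^ 2) * √M := by
        gcongr
        exact hCS.trans (by gcongr)

theorem Matrix.PosSemidef.det_le_trace_div_card_pow {n : Type*} [Fintype n] [DecidableEq n]
    [Nonempty n] {A : Matrix n n ℝ} (hA : A.PosSemidef) :
    A.det ≤ (A.trace / Fintype.card n) ^ Fintype.card n := by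
  rw [hA.1.det_eq_prod_eigenvalues, hA.1.trace_eq_sum_eigenvalues]
  simpa using Real.prod_le_arith_mean_pow_card _ hA.eigenvalues_nonneg

theorem Matrix.PosDef.dotProduct_inv_mulVec_nonneg {n : Type*} [Fintype n] [DecidableEq n]
    {A : Matrix n n ℝ} (hA : A.PosDef) (v : n → ℝ) : 0 ≤ v ⬝ᵥ A⁻¹ *ᵥ v := by
  simpa using hA.inv.posSemidef.dotProduct_mulVec_nonneg v

theorem Matrix.det_add_vecMulVec {m α : Type*} [Fintype m] [DecidableEq m] [CommRing α]
    {A : Matrix m m α} (hA : IsUnit A.det) (u v : m → α) :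
    (A + vecMulVec u v).det = A.det * (1 + v ⬝ᵥ A⁻¹ *ᵥ u) := by
  rw [vecMulVec_eq Unit, det_add_replicateCol_mul_replicateRow hA, Matrix.mul_assoc,
    det_unique (n := Unit)]
  simp [replicateRow, replicateCol, mul_apply, dotProduct, mulVec]

namespace Matrix

variable {n : Type*} [Fintype n] {Z : ℕ → Matrix n n ℝ} {c : ℕ → ℝ} {x : ℕ → n → ℝ} {m : ℕ}

theorem posDef_of_rankOne_updates (h1 : (Z 1).PosDef) (hc : ∀ k, 1 ≤ k → 0 ≤ c k)
    (hZ : ∀ k, 1 ≤ k → Z (k + 1) = Z k + c k • vecMulVec (x k) (x k)) (hm : 1 ≤ m) :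
    (Z m).PosDef := by
  induction m, hm using Nat.le_induction with
  | base => exact h1
  | succ k hk ih =>
    rw [hZ k hk]
    exact ih.add_posSemidef ((posSemidef_vecMulVec_self_star (x k)).smul (hc k hk))

theorem trace_eq_add_sum_of_rankOne_updates
    (hZ : ∀ k, 1 ≤ k → Z (k + 1) = Z k + c k • vecMulVec (x k) (x k)) (hm : 1 ≤ m) :
    (Z m).trace = (Z 1).trace + ∑ k ∈ Ico 1 m, c k * (x k ⬝ᵥ x k) := by
  induction m, hm using Nat.le_induction with
  | base => simp
  | succ k hk ih =>
    rw [hZ k hk, trace_add, trace_smul, trace_vecMulVec, ih, sum_Ico_succ_top hk, smul_eq_mul,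
      add_assoc]

variable [DecidableEq n]

theorem det_eq_mul_prod_of_rankOne_updates (h1 : (Z 1).PosDef) (hc : ∀ k, 1 ≤ k → 0 ≤ c k)
    (hZ : ∀ k, 1 ≤ k → Z (k + 1) = Z k + c k • vecMulVec (x k) (x k)) (hm : 1 ≤ m) :
    (Z m).det = (Z 1).det * ∏ k ∈ Ico 1 m, (1 + c k * (x k ⬝ᵥ (Z k)⁻¹ *ᵥ x k)) := by
  induction m, hm using Nat.le_induction with
  | base => simp
  | succ k hk ih =>
    have hdet := (posDef_of_rankOne_updates h1 hc hZ hk).det_pos.ne'.isUnit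
    rw [hZ k hk, ← smul_vecMulVec, det_add_vecMulVec hdet, ih, prod_Ico_succ_top hk,
      mulVec_smul, dotProduct_smul, smul_eq_mul]
    ring

variable [Nonempty n] {lam : ℝ}

theorem sum_log_one_add_le_of_rankOne_updates (hlam : 0 < lam) (hZ1 : Z 1 = lam • 1)
    (hc : ∀ k, 1 ≤ k → 0 ≤ c k)
    (hZ : ∀ k, 1 ≤ k → Z (k + 1) = Z k + c k • vecMulVec (x k) (x k)) (hm : 1 ≤ m) :
    ∑ k ∈ Ico 1 m, Real.log (1 + c k * (x k ⬝ᵥ (Z k)⁻¹ *ᵥ x k)) ≤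
      Fintype.card n * Real.log ((Z m).trace / (Fintype.card n * lam)) := by
  have h1 : (Z 1).PosDef := hZ1 ▸ PosDef.one.smul hlam
  have hpos : ∀ k ∈ Ico 1 m, 0 < 1 + c k * (x k ⬝ᵥ (Z k)⁻¹ *ᵥ x k) := fun k hk => by
    have hq := (posDef_of_rankOne_updates h1 hc hZ (mem_Ico.1 hk).1).dotProduct_inv_mulVec_nonneg
      (x k)
    have := hc k (mem_Ico.1 hk).1
    positivity
  have hdet := det_eq_mul_prod_of_rankOne_updates h1 hc hZ hm
  rw [hZ1, det_smul, det_one, mul_one] at hdet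
  have hamgm := (posDef_of_rankOne_updates h1 hc hZ hm).posSemidef.det_le_trace_div_card_pow
  rw [← Real.log_prod fun k hk => (hpos k hk).ne', ← Real.log_pow]
  refine Real.log_le_log (prod_pos hpos) ?_
  rw [div_mul_eq_div_div, div_pow, le_div_iff₀ (by positivity), mul_comm, ← hdet]
  exact hamgm

theorem sum_min_one_le_of_rankOne_updates {R : ℝ} (hlam : 0 < lam) (hZ1 : Z 1 = lam • 1)
    (hc : ∀ k, 1 ≤ k → 0 ≤ c k)
    (hZ : ∀ k, 1 ≤ k → Z (k + 1) = Z k + c k • vecMulVec (x k) (x k)) (K : ℕ)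
    (hR : ∀ k ∈ Icc 1 K, c k * (x k ⬝ᵥ x k) ≤ R) :
    ∑ k ∈ Icc 1 K, min 1 (c k * (x k ⬝ᵥ (Z k)⁻¹ *ᵥ x k)) ≤
      2 * Fintype.card n * Real.log (1 + K * R / (Fintype.card n * lam)) := by
  set N := (Fintype.card n : ℝ)
  have hNlam : 0 < N * lam := by positivity
  have h1 : (Z 1).PosDef := hZ1 ▸ PosDef.one.smul hlam
  have htr : (Z (K + 1)).trace ≤ N * lam + K * R := by
    rw [trace_eq_add_sum_of_rankOne_updates hZ (by omega), hZ1, trace_smul, trace_one,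
      Ico_add_one_right_eq_Icc, smul_eq_mul, mul_comm lam]
    gcongr
    simpa using sum_le_card_nsmul _ _ _ hR
  have htr_pos := (posDef_of_rankOne_updates h1 hc hZ (by omega : 1 ≤ K + 1)).trace_pos
  calc ∑ k ∈ Icc 1 K, min 1 (c k * (x k ⬝ᵥ (Z k)⁻¹ *ᵥ x k))
      ≤ ∑ k ∈ Icc 1 K, 2 * Real.log (1 + c k * (x k ⬝ᵥ (Z k)⁻¹ *ᵥ x k)) := by
        refine sum_le_sum fun k hk => Real.min_one_le_two_mul_log_one_add ?_
        exact mul_nonneg (hc k (mem_Icc.1 hk).1)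
          ((posDef_of_rankOne_updates h1 hc hZ (mem_Icc.1 hk).1).dotProduct_inv_mulVec_nonneg _)
    _ ≤ 2 * (N * Real.log ((Z (K + 1)).trace / (N * lam))) := by
        rw [← mul_sum, ← Ico_add_one_right_eq_Icc]
        gcongr
        exact sum_log_one_add_le_of_rankOne_updates hlam hZ1 hc hZ (by omega)
    _ ≤ 2 * (N * Real.log (1 + K * R / (N * lam))) := by
        gcongr
        rw [div_le_iff₀ hNlam, add_mul, div_mul_cancel₀ _ hNlam.ne', one_mul]
        linarith
    _ = 2 * N * Real.log (1 + K * R / (N * lam)) := by ring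

end Matrix

theorem stmt_2_general (d K : ℕ) (hd : 0 < d) (hK : 0 < K)
    (α γ lam L : ℝ) (hα : 0 < α) (hlam : 0 < lam)
    (σ β : ℕ → ℝ)
    (hβ : ∀ k ∈ Finset.Icc 1 K, 0 ≤ β k)
    (x : ℕ → Fin d → ℝ)
    (hx : ∀ k ∈ Finset.Icc 1 K, Real.sqrt (x k ⬝ᵥ x k) ≤ L)
    (σbar : ℕ → ℝ) (Z : ℕ → Matrix (Fin d) (Fin d) ℝ)
    (hZ1 : Z 1 = lam • (1 : Matrix (Fin d) (Fin d) ℝ))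
    (hσbar : ∀ k, 1 ≤ k →
      σbar k = max (σ k) (max α
        (γ * Real.sqrt (Real.sqrt (x k ⬝ᵥ (Z k)⁻¹.mulVec (x k))))))
    (hZ : ∀ k, 1 ≤ k →
      Z (k + 1) = Z k + ((σbar k) ^ 2)⁻¹ • vecMulVec (x k) (x k)) :
    ∑ k ∈ Finset.Icc 1 K, min 1 (β k * Real.sqrt (x k ⬝ᵥ (Z k)⁻¹.mulVec (x k))) ≤
      2 * d * Real.log (1 + K * L ^ 2 / (d * lam * α ^ 2)) +
      2 * ((Finset.Icc 1 K).sup' (Finset.nonempty_Icc.2 hK) β) * γ ^ 2 * d *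
        Real.log (1 + K * L ^ 2 / (d * lam * α ^ 2)) +
      2 * Real.sqrt (d * Real.log (1 + K * L ^ 2 / (d * lam * α ^ 2))) *
        Real.sqrt (∑ k ∈ Finset.Icc 1 K, β k ^ 2 * (σ k ^ 2 + α ^ 2)) := by
  have : Nonempty (Fin d) := ⟨⟨0, hd⟩⟩
  set ι := Real.log (1 + K * L ^ 2 / (d * lam * α ^ 2))
  set B := (Icc 1 K).sup' (nonempty_Icc.2 hK) β
  have hc k (_ : 1 ≤ k) : 0 ≤ (σbar k ^ 2)⁻¹ := by positivity
  have hZ1_pd : (Z 1).PosDef := hZ1 ▸ PosDef.one.smul hlam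
  have hq k (hk : 1 ≤ k) : 0 ≤ x k ⬝ᵥ (Z k)⁻¹ *ᵥ x k :=
    (posDef_of_rankOne_updates hZ1_pd hc hZ hk).dotProduct_inv_mulVec_nonneg _
  have hpot : ∑ k ∈ Icc 1 K, min 1 ((σbar k ^ 2)⁻¹ * (x k ⬝ᵥ (Z k)⁻¹ *ᵥ x k)) ≤ 2 * d * ι := by
    have hR k (hk : k ∈ Icc 1 K) : (σbar k ^ 2)⁻¹ * (x k ⬝ᵥ x k) ≤ L ^ 2 / α ^ 2 :=
      inv_sq_mul_le_sq_div_sq hα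
        (hσbar k (mem_Icc.1 hk).1 ▸ le_max_of_le_right (le_max_left _ _)) (hx k hk)
    calc _ ≤ _ := sum_min_one_le_of_rankOne_updates hlam hZ1 hc hZ K hR
      _ = 2 * d * ι := by rw [Fintype.card_fin, mul_div_assoc', div_div, mul_comm (α ^ 2)]
  have hB : 0 ≤ B := (hβ 1 (left_mem_Icc.2 hK)).trans (le_sup' β (left_mem_Icc.2 hK))
  refine (sum_le_mul_add_sqrt_mul_sqrt _ (C := 1 + B * γ ^ 2)
    (a := fun k => β k * √(σ k ^ 2 + α ^ 2)) (by positivity)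
    (fun k hk => le_min zero_le_one
      (mul_nonneg (hc k (mem_Icc.1 hk).1) (hq k (mem_Icc.1 hk).1)))
    hpot fun k hk => min_one_mul_sqrt_le (hβ k hk) (le_sup' β hk) hα (hq k (mem_Icc.1 hk).1)
      (hσbar k (mem_Icc.1 hk).1)).trans ?_
  have hS : ∑ k ∈ Icc 1 K, (β k * √(σ k ^ 2 + α ^ 2)) ^ 2 =
      ∑ k ∈ Icc 1 K, β k ^ 2 * (σ k ^ 2 + α ^ 2) :=
    sum_congr rfl fun k _ => by rw [mul_pow, Real.sq_sqrt (by positivity)]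
  have hsqrt : √(2 * d * ι) ≤ 2 * √(d * ι) := by
    rw [mul_assoc, Real.sqrt_mul zero_le_two]
    gcongr
    exact Real.sqrt_le_iff.2 ⟨zero_le_two, by norm_num⟩
  rw [hS]
  nlinarith [mul_le_mul_of_nonneg_left hsqrt
    (Real.sqrt_nonneg (∑ k ∈ Icc 1 K, β k ^ 2 * (σ k ^ 2 + α ^ 2)))]

/-- Elliptical-potential style bound with adaptive weights
(Lemma B.1, Zhou & Gu 2022). -/
theorem stmt_2 (d K : ℕ) (hd : 0 < d) (hK : 0 < K)
    (α γ lam L : ℝ) (hα : 0 < α) (hγ : 0 < γ) (hlam : 0 < lam) (hL : 0 < L)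
    (σ β : ℕ → ℝ)
    (hσ : ∀ k ∈ Finset.Icc 1 K, 0 ≤ σ k)
    (hβ : ∀ k ∈ Finset.Icc 1 K, 0 ≤ β k)
    (x : ℕ → Fin d → ℝ)
    (hx : ∀ k ∈ Finset.Icc 1 K, Real.sqrt (x k ⬝ᵥ x k) ≤ L)
    (σbar : ℕ → ℝ) (Z : ℕ → Matrix (Fin d) (Fin d) ℝ)
    (hZ1 : Z 1 = lam • (1 : Matrix (Fin d) (Fin d) ℝ))
    (hσbar : ∀ k, 1 ≤ k →
      σbar k = max (σ k) (max α
        (γ * Real.sqrt (Real.sqrt (x k ⬝ᵥ (Z k)⁻¹.mulVec (x k))))))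
    (hZ : ∀ k, 1 ≤ k →
      Z (k + 1) = Z k + ((σbar k) ^ 2)⁻¹ • vecMulVec (x k) (x k)) :
    ∑ k ∈ Finset.Icc 1 K, min 1 (β k * Real.sqrt (x k ⬝ᵥ (Z k)⁻¹.mulVec (x k))) ≤
      2 * d * Real.log (1 + K * L ^ 2 / (d * lam * α ^ 2)) +
      2 * ((Finset.Icc 1 K).sup' (Finset.nonempty_Icc.2 hK) β) * γ ^ 2 * d *
        Real.log (1 + K * L ^ 2 / (d * lam * α ^ 2)) +
      2 * Real.sqrt (d * Real.log (1 + K * L ^ 2 / (d * lam * α ^ 2))) *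
        Real.sqrt (∑ k ∈ Finset.Icc 1 K, β k ^ 2 * (σ k ^ 2 + α ^ 2)) :=
  stmt_2_general d K hd hK α γ lam L hα hlam σ β hβ x hx σbar Z hZ1 hσbar hZ
end

section
/- Let d, K, H be positive integers and λ, α > 0 reals. For k ∈ {1,…,K} and h ∈ {1,…,H}, let x_{k,h} ∈ ℝ^d with ‖x_{k,h}‖₂ ≤ 1 and let σ_{k,h} ≥ α be reals. Define d×d matrices recursively by Z₁ = λ·I_d and Z_{k+1} = Z_k + Σ_{h=1}^H x_{k,h} x_{k,h}ᵀ / σ_{k,h}². Then the number of indices k ∈ {1,…,K} such that det(Z_{k+1}) > 16 · det(Z_k) is at most (d/2)·log(1 + K H / (d λ α²)). -/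
/-!
The increments `Σₕ xxᵀ/σ²` are positive semidefinite and `Z₁ = λI` is positive definite, so
`det Z_k` is nondecreasing and each of the `N` counted jumps multiplies it by more than `16`:
`16ᴺ λᵈ ≤ det Z_{K+1}`. Each increment has trace at most `H/α²`, so by AM-GM on the eigenvalues
`det Z_{K+1} ≤ (tr Z_{K+1} / d)ᵈ ≤ λᵈ (1 + KH/(dλα²))ᵈ`. Taking logarithms and using
`log 16 > 2` gives the bound.
-/

open Matrix Finset

theorem Real.prod_le_sum_div_card_pow {ι : Type*} (s : Finset ι) {z : ι → ℝ}
    (hz : ∀ i ∈ s, 0 ≤ z i) : ∏ i ∈ s, z i ≤ ((∑ i ∈ s, z i) / #s) ^ #s := by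
  rcases s.eq_empty_or_nonempty with rfl | hs
  · simp
  have hcard : (0 : ℝ) < #s := by exact_mod_cast hs.card_pos
  have hw : ∑ _i ∈ s, (#s : ℝ)⁻¹ = 1 := by
    rw [sum_const, nsmul_eq_mul, mul_inv_cancel₀ hcard.ne']
  have hamgm := Real.geom_mean_le_arith_mean_weighted s (fun _ => (#s : ℝ)⁻¹) z
    (fun _ _ => by positivity) hw hz
  rw [← mul_sum, inv_mul_eq_div] at hamgm
  calc ∏ i ∈ s, z i = (∏ i ∈ s, z i ^ (#s : ℝ)⁻¹) ^ #s := by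
        rw [← prod_pow]
        refine prod_congr rfl fun i hi => ?_
        rw [← Real.rpow_natCast, ← Real.rpow_mul (hz i hi), inv_mul_cancel₀ hcard.ne',
          Real.rpow_one]
    _ ≤ ((∑ i ∈ s, z i) / #s) ^ #s :=
        pow_le_pow_left₀ (prod_nonneg fun i hi => Real.rpow_nonneg (hz i hi) _) hamgm _

theorem Real.natCast_le_half_mul_log_of_sixteen_pow_le {N d : ℕ} {t : ℝ}
    (h : (16 : ℝ) ^ N ≤ t ^ d) : (N : ℝ) ≤ d / 2 * Real.log t := by
  have hlog := Real.log_le_log (by positivity) h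
  rw [Real.log_pow, Real.log_pow, show (16 : ℝ) = 2 ^ 4 by norm_num, Real.log_pow] at hlog
  have hlog16 : (N : ℝ) * 2 ≤ N * (4 * Real.log 2) :=
    mul_le_mul_of_nonneg_left (by linarith [Real.log_two_gt_d9]) N.cast_nonneg
  push_cast at hlog
  linarith

theorem pow_card_filter_mul_lt_mul_le {a : ℕ → ℝ} {c : ℝ} (hc : 0 ≤ c)
    (ha : ∀ k, 1 ≤ k → a k ≤ a (k + 1)) (K : ℕ) :
    c ^ #{k ∈ Icc 1 K | c * a k < a (k + 1)} * a 1 ≤ a (K + 1) := by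
  induction K with
  | zero => simp
  | succ K ih =>
    rw [← insert_Icc_right_eq_Icc_add_one (by omega), filter_insert]
    split_ifs with hjump
    · rw [card_insert_of_notMem (by simp), pow_succ', mul_assoc]
      exact (mul_le_mul_of_nonneg_left ih hc).trans hjump.le
    · exact ih.trans (ha (K + 1) (by omega))

theorem le_add_mul_of_succ_le_add {a : ℕ → ℝ} {b : ℝ} {K : ℕ}
    (ha : ∀ k ∈ Icc 1 K, a (k + 1) ≤ a k + b) : a (K + 1) ≤ a 1 + K * b := by
  induction K with
  | zero => simp
  | succ K ih =>
    have hstep := ha (K + 1) (by simp)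
    have hprev := ih fun k hk => ha k (Icc_subset_Icc_right K.le_succ hk)
    push_cast
    linarith

namespace Matrix

variable {n : Type*} [Fintype n]

theorem trace_inv_sq_smul_vecMulVec_self_le {v : n → ℝ} {σ α : ℝ}
    (hv : Real.sqrt (v ⬝ᵥ v) ≤ 1) (hα : 0 < α) (hσ : α ≤ σ) :
    ((σ ^ 2)⁻¹ • vecMulVec v v).trace ≤ (α ^ 2)⁻¹ := by
  rw [trace_smul, trace_vecMulVec, smul_eq_mul]
  calc (σ ^ 2)⁻¹ * (v ⬝ᵥ v) ≤ (σ ^ 2)⁻¹ * 1 :=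
        mul_le_mul_of_nonneg_left (Real.sqrt_le_one.mp hv) (by positivity)
    _ ≤ (α ^ 2)⁻¹ := by
        rw [mul_one]
        exact inv_anti₀ (by positivity) (pow_le_pow_left₀ hα.le hσ 2)

variable [DecidableEq n]

theorem PosSemidef.det_le_trace_div_card_pow_s6 {A : Matrix n n ℝ} (hA : A.PosSemidef) :
    A.det ≤ (A.trace / Fintype.card n) ^ Fintype.card n := by
  rw [hA.1.det_eq_prod_eigenvalues, hA.1.trace_eq_sum_eigenvalues]
  simpa using Real.prod_le_sum_div_card_pow univ fun i _ => hA.eigenvalues_nonneg i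

open scoped MatrixOrder in
theorem PosSemidef.one_le_det_one_add {C : Matrix n n ℝ} (hC : C.PosSemidef) :
    1 ≤ (1 + C).det := by
  have hH : (1 + C).IsHermitian := isHermitian_one.add hC.1
  have hspec : ∀ μ ∈ spectrum ℝ (1 + C), 1 ≤ μ :=
    (CFC.one_le_iff (1 + C) hH.isSelfAdjoint).mp (le_add_of_nonneg_right hC.nonneg)
  rw [hH.det_eq_prod_eigenvalues]
  exact one_le_prod fun i _ => by simpa using hspec _ (hH.eigenvalues_mem_spectrum_real i)

open scoped MatrixOrder in
theorem PosDef.det_le_det_add {A B : Matrix n n ℝ} (hA : A.PosDef) (hB : B.PosSemidef) :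
    A.det ≤ (A + B).det := by
  set S := CFC.sqrt A
  have hS : S.IsHermitian := (CFC.sqrt_nonneg A).posSemidef.1
  have hSS : S * S = A := CFC.sqrt_mul_sqrt_self A hA.posSemidef.nonneg
  have hSdet : IsUnit S.det := isUnit_iff_ne_zero.mpr fun h => hA.det_pos.ne' <| by
    rw [← hSS, det_mul, h, zero_mul]
  have hC : (S⁻¹ * B * S⁻¹).PosSemidef := by
    have := hB.conjTranspose_mul_mul_same S⁻¹
    rwa [hS.inv.eq] at this
  have hfactor : A + B = S * (1 + S⁻¹ * B * S⁻¹) * S := by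
    rw [Matrix.mul_add, Matrix.add_mul, Matrix.mul_one, hSS, ← Matrix.mul_assoc,
      ← Matrix.mul_assoc, mul_nonsing_inv _ hSdet, Matrix.one_mul, Matrix.mul_assoc,
      nonsing_inv_mul _ hSdet, Matrix.mul_one]
  calc A.det = S.det * S.det * 1 := by rw [mul_one, ← det_mul, hSS]
    _ ≤ S.det * S.det * (1 + S⁻¹ * B * S⁻¹).det :=
        mul_le_mul_of_nonneg_left hC.one_le_det_one_add (mul_self_nonneg _)
    _ = (A + B).det := by rw [hfactor, det_mul, det_mul]; ring

end Matrix

theorem stmt_6_general (d K H : ℕ) (hd : 0 < d)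
    (lam α : ℝ) (hlam : 0 < lam) (hα : 0 < α)
    (x : ℕ → ℕ → Fin d → ℝ)
    (hx : ∀ k ∈ Finset.Icc 1 K, ∀ h ∈ Finset.Icc 1 H, Real.sqrt (x k h ⬝ᵥ x k h) ≤ 1)
    (σ : ℕ → ℕ → ℝ)
    (hσ : ∀ k ∈ Finset.Icc 1 K, ∀ h ∈ Finset.Icc 1 H, α ≤ σ k h)
    (Z : ℕ → Matrix (Fin d) (Fin d) ℝ)
    (hZ1 : Z 1 = lam • (1 : Matrix (Fin d) (Fin d) ℝ))
    (hZ : ∀ k, 1 ≤ k → Z (k + 1) =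
      Z k + ∑ h ∈ Finset.Icc 1 H, ((σ k h) ^ 2)⁻¹ • vecMulVec (x k h) (x k h)) :
    (((Finset.Icc 1 K).filter fun k => 16 * (Z k).det < (Z (k + 1)).det).card : ℝ) ≤
      (d : ℝ) / 2 * Real.log (1 + K * H / (d * lam * α ^ 2)) := by
  have hstep : ∀ k, (∑ h ∈ Icc 1 H, ((σ k h) ^ 2)⁻¹ • vecMulVec (x k h) (x k h)).PosSemidef :=
    fun k => posSemidef_sum _ fun h _ => by
      simpa using (posSemidef_vecMulVec_self_star (x k h)).smul (inv_nonneg.mpr (sq_nonneg _))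
  have hpos : ∀ k, 1 ≤ k → (Z k).PosDef := Nat.le_induction (hZ1 ▸ PosDef.one.smul hlam)
    fun k hk ih => hZ k hk ▸ ih.add_posSemidef (hstep k)
  have hgrowth : (16 : ℝ) ^ #{k ∈ Icc 1 K | 16 * (Z k).det < (Z (k + 1)).det} * lam ^ d ≤
      (Z (K + 1)).det := by
    simpa [hZ1, det_smul] using pow_card_filter_mul_lt_mul_le (a := fun k => (Z k).det)
      (by norm_num) (fun k hk => hZ k hk ▸ (hpos k hk).det_le_det_add (hstep k)) K
  have htrace : (Z (K + 1)).trace ≤ lam * d + K * (H * (α ^ 2)⁻¹) := by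
    simpa [hZ1] using le_add_mul_of_succ_le_add (a := fun k => (Z k).trace) (K := K)
      (b := H * (α ^ 2)⁻¹) fun k hk => by
        rw [hZ k (mem_Icc.mp hk).1, trace_add, trace_sum, add_le_add_iff_left]
        simpa using sum_le_sum fun h hh =>
          trace_inv_sq_smul_vecMulVec_self_le (hx k hk h hh) hα (hσ k hk h hh)
  have hdet : (Z (K + 1)).det ≤ (lam * (1 + K * H / (d * lam * α ^ 2))) ^ d := by
    have hA := (hpos (K + 1) K.succ_pos).posSemidef
    have hAMGM := hA.det_le_trace_div_card_pow_s6
    rw [Fintype.card_fin] at hAMGM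
    refine hAMGM.trans (pow_le_pow_left₀ (div_nonneg hA.trace_nonneg d.cast_nonneg) ?_ d)
    rw [div_le_iff₀ (by positivity)]
    exact htrace.trans_eq (by field_simp)
  refine Real.natCast_le_half_mul_log_of_sixteen_pow_le ?_
  rw [mul_pow, mul_comm] at hdet
  exact le_of_mul_le_mul_right (hgrowth.trans hdet) (by positivity)

/-- The number of episodes in which the determinant of the covariance matrix
grows by more than a factor of 16 is at most `(d/2)·log(1 + KH/(dλα²))`. -/
theorem stmt_6 (d K H : ℕ) (hd : 0 < d) (hK : 0 < K) (hH : 0 < H)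
    (lam α : ℝ) (hlam : 0 < lam) (hα : 0 < α)
    (x : ℕ → ℕ → Fin d → ℝ)
    (hx : ∀ k ∈ Finset.Icc 1 K, ∀ h ∈ Finset.Icc 1 H, Real.sqrt (x k h ⬝ᵥ x k h) ≤ 1)
    (σ : ℕ → ℕ → ℝ)
    (hσ : ∀ k ∈ Finset.Icc 1 K, ∀ h ∈ Finset.Icc 1 H, α ≤ σ k h)
    (Z : ℕ → Matrix (Fin d) (Fin d) ℝ)
    (hZ1 : Z 1 = lam • (1 : Matrix (Fin d) (Fin d) ℝ))
    (hZ : ∀ k, 1 ≤ k → Z (k + 1) =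
      Z k + ∑ h ∈ Finset.Icc 1 H, ((σ k h) ^ 2)⁻¹ • vecMulVec (x k h) (x k h)) :
    (((Finset.Icc 1 K).filter fun k => 16 * (Z k).det < (Z (k + 1)).det).card : ℝ) ≤
      (d : ℝ) / 2 * Real.log (1 + K * H / (d * lam * α ^ 2)) :=
  stmt_6_general d K H hd lam α hlam hα x hx σ hσ Z hZ1 hZ
end
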